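/- arXiv:1608.07847 — 4 statements merged into one kernel-verified Lean document; each statement's English description precedes it below -/
import Mathlib

section
/- A rectangle is maximal if and only if it is simultaneously maximal to the left, to the right, to the bottom, and to the top; that is, each of the four one-step extensions (when it exists within the image) strictly increases the fingerprint, and a boundary touching the image border counts as maximal in that direction. -/
/-- The fingerprint (set of distinct colors) of the rectangle ⟨i₀,i₁;j₀,j₁⟩ of the
image `M`. -/
def fpF {m n σ : ℕ} (M : Fin m → Fin n → Fin σ) (i0 i1 : Fin m) (j0 j1 : Fin n) :
    Finset (Fin σ) :=
  Finset.image (fun p : Fin m × Fin n => M p.1 p.2)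
    (Finset.univ.filter fun p : Fin m × Fin n =>
      i0 ≤ p.1 ∧ p.1 ≤ i1 ∧ j0 ≤ p.2 ∧ p.2 ≤ j1)

/-- A rectangle is maximal if no rectangle properly containing it has the same
fingerprint. -/
def MaximalRect {m n σ : ℕ} (M : Fin m → Fin n → Fin σ)
    (i0 i1 : Fin m) (j0 j1 : Fin n) : Prop :=
  i0 ≤ i1 ∧ j0 ≤ j1 ∧
  ∀ i0' i1' : Fin m, ∀ j0' j1' : Fin n,
    i0' ≤ i0 → i1 ≤ i1' → j0' ≤ j0 → j1 ≤ j1' →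
    (i0', i1', j0', j1') ≠ (i0, i1, j0, j1) →
    fpF M i0' i1' j0' j1' ≠ fpF M i0 i1 j0 j1

/-!
Ordered by containment, rectangles form a finite product of four chains (the lower ends
reversed), and the one-step extensions of a rectangle are exactly its covers in this order.
The fingerprint is monotone, so if some larger rectangle `R ⊋ r` had the fingerprint of `r`,
then so would any cover `s` of `r` with `s ⊆ R`, by `f r ⊆ f s ⊆ f R = f r`.
-/

open OrderDual

theorem forall_lt_ne_iff_forall_covBy_ne {α β : Type*} [PartialOrder α] [IsStronglyAtomic α]
    [PartialOrder β] {f : α → β} (hf : Monotone f) {a : α} :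
    (∀ b, a < b → f b ≠ f a) ↔ ∀ b, a ⋖ b → f b ≠ f a := by
  refine ⟨fun h b hab => h b hab.lt, fun h b hab hfb => ?_⟩
  obtain ⟨c, hac, hcb⟩ := exists_covBy_le_of_lt hab
  exact h c hac <| le_antisymm (hfb ▸ hf hcb) (hf hac.le)

namespace Fin

variable {k : ℕ} {a : Fin k} {P : Fin k → Prop}

theorem forall_covBy_imp_iff_val_eq_zero_or :
    (∀ b, b ⋖ a → P b) ↔ a.val = 0 ∨ ∃ b : Fin k, b.val + 1 = a.val ∧ P b := by
  simp only [Fin.covBy_iff, Nat.covBy_iff_add_one_eq]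
  constructor
  · intro h
    by_cases h0 : a.val = 0
    · exact .inl h0
    · exact .inr ⟨⟨a.val - 1, by omega⟩, by simp only; omega, h _ (by simp only; omega)⟩
  · rintro (h0 | ⟨b, hb, hP⟩) c hc
    · omega
    · exact (Fin.ext (by omega) : c = b) ▸ hP

theorem forall_covBy_imp_iff_val_eq_sub_one_or :
    (∀ b, a ⋖ b → P b) ↔ a.val = k - 1 ∨ ∃ b : Fin k, a.val + 1 = b.val ∧ P b := by
  simp only [Fin.covBy_iff, Nat.covBy_iff_add_one_eq]
  constructor
  · intro h
    by_cases hlast : a.val = k - 1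
    · exact .inl hlast
    · exact .inr ⟨⟨a.val + 1, by omega⟩, rfl, h _ rfl⟩
  · rintro (hlast | ⟨b, hb, hP⟩) c hc
    · omega
    · exact (Fin.ext (by omega) : c = b) ▸ hP

end Fin

/-- `⟨i₀,i₁;j₀,j₁⟩` is `(toDual i₀, i₁, toDual j₀, j₁)`, so that `≤` is containment. -/
abbrev Rect (m n : ℕ) := (Fin m)ᵒᵈ × Fin m × (Fin n)ᵒᵈ × Fin n

namespace Rect

variable {m n σ : ℕ}

def mk (i0 i1 : Fin m) (j0 j1 : Fin n) : Rect m n := (toDual i0, i1, toDual j0, j1)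

def fp (M : Fin m → Fin n → Fin σ) (r : Rect m n) : Finset (Fin σ) :=
  fpF M (ofDual r.1) r.2.1 (ofDual r.2.2.1) r.2.2.2

theorem fp_monotone (M : Fin m → Fin n → Fin σ) : Monotone (fp M) := by
  rintro ⟨i0, i1, j0, j1⟩ ⟨i0', i1', j0', j1'⟩ ⟨hi0, hi1, hj0, hj1⟩
  refine Finset.image_subset_image fun p hp => ?_
  simp only [Finset.mem_filter, Finset.mem_univ, true_and] at hp ⊢
  exact ⟨le_trans (α := Fin m) hi0 hp.1, hp.2.1.trans hi1,
    le_trans (α := Fin n) hj0 hp.2.2.1, hp.2.2.2.trans hj1⟩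

theorem forall_covBy_imp_iff {P : Rect m n → Prop} {i0 i1 : Fin m} {j0 j1 : Fin n} :
    (∀ r, mk i0 i1 j0 j1 ⋖ r → P r) ↔
      (∀ i0', i0' ⋖ i0 → P (mk i0' i1 j0 j1)) ∧ (∀ i1', i1 ⋖ i1' → P (mk i0 i1' j0 j1)) ∧
      (∀ j0', j0' ⋖ j0 → P (mk i0 i1 j0' j1)) ∧ (∀ j1', j1 ⋖ j1' → P (mk i0 i1 j0 j1')) := by
  simp only [Prod.forall, OrderDual.forall, mk, Prod.mk_covBy_mk_iff, toDual_covBy_toDual_iff,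
    Prod.mk.injEq, toDual_inj, or_imp, forall_and, and_imp]
  grind

end Rect

theorem maximalRect_iff_forall_lt {m n σ : ℕ} (M : Fin m → Fin n → Fin σ)
    (i0 i1 : Fin m) (j0 j1 : Fin n) :
    MaximalRect M i0 i1 j0 j1 ↔ i0 ≤ i1 ∧ j0 ≤ j1 ∧
      ∀ r, Rect.mk i0 i1 j0 j1 < r → Rect.fp M r ≠ Rect.fp M (Rect.mk i0 i1 j0 j1) := by
  simp only [MaximalRect, Prod.forall, OrderDual.forall, lt_iff_le_and_ne, Rect.mk,
    Prod.mk_le_mk, toDual_le_toDual, ne_eq, Prod.mk.injEq, toDual_inj, Rect.fp, ofDual_toDual,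
    and_imp]
  grind

/-- A rectangle is maximal iff it is maximal to the left, right, bottom and top:
each one-step extension (when it exists within the image) changes the fingerprint,
and a boundary touching the image border counts as maximal in that direction. -/
theorem statement3 (m n σ : ℕ) (M : Fin m → Fin n → Fin σ)
    (i0 i1 : Fin m) (j0 j1 : Fin n) (hi : i0 ≤ i1) (hj : j0 ≤ j1) :
    MaximalRect M i0 i1 j0 j1 ↔
      ((j0.val = 0 ∨ ∃ j0' : Fin n, j0'.val + 1 = j0.val ∧
          fpF M i0 i1 j0' j1 ≠ fpF M i0 i1 j0 j1) ∧
       (j1.val = n - 1 ∨ ∃ j1' : Fin n, j1.val + 1 = j1'.val ∧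
          fpF M i0 i1 j0 j1' ≠ fpF M i0 i1 j0 j1) ∧
       (i0.val = 0 ∨ ∃ i0' : Fin m, i0'.val + 1 = i0.val ∧
          fpF M i0' i1 j0 j1 ≠ fpF M i0 i1 j0 j1) ∧
       (i1.val = m - 1 ∨ ∃ i1' : Fin m, i1.val + 1 = i1'.val ∧
          fpF M i0 i1' j0 j1 ≠ fpF M i0 i1 j0 j1)) := by
  rw [maximalRect_iff_forall_lt, and_iff_right hi, and_iff_right hj,
    forall_lt_ne_iff_forall_covBy_ne (Rect.fp_monotone M), Rect.forall_covBy_imp_iff]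
  simp only [Rect.fp, Rect.mk, ofDual_toDual, Fin.forall_covBy_imp_iff_val_eq_zero_or,
    Fin.forall_covBy_imp_iff_val_eq_sub_one_or]
  tauto
end

section
/- Fix a bottom row i₀, a top row i₁ and a left column j₀ of an image. If r = ⟨i₀,i₁;j₀,j₁⟩ and r' = ⟨i₀,i₁;j₀,j₁'⟩ are two distinct rectangles with the same rows and left column that are both maximal, then their fingerprints are distinct. -/
theorem MaximalRect.fpF_ne_of_lt {m n σ : ℕ} {M : Fin m → Fin n → Fin σ}
    {i0 i1 : Fin m} {j0 j1 j1' : Fin n} (h : MaximalRect M i0 i1 j0 j1) (hlt : j1 < j1') :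
    fpF M i0 i1 j0 j1' ≠ fpF M i0 i1 j0 j1 :=
  h.2.2 i0 i1 j0 j1' le_rfl le_rfl le_rfl hlt.le
    (by simpa [Prod.ext_iff] using hlt.ne')

/-- Two distinct maximal rectangles with the same rows and the same left column
have distinct fingerprints. -/
theorem statement4 (m n σ : ℕ) (M : Fin m → Fin n → Fin σ)
    (i0 i1 : Fin m) (j0 j1 j1' : Fin n)
    (h : MaximalRect M i0 i1 j0 j1) (h' : MaximalRect M i0 i1 j0 j1')
    (hne : j1 ≠ j1') :
    fpF M i0 i1 j0 j1 ≠ fpF M i0 i1 j0 j1' := by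
  rcases hne.lt_or_gt with hlt | hgt
  · exact (h.fpF_ne_of_lt hlt).symm
  · exact h'.fpF_ne_of_lt hgt
end

section
/- Fix rows i₀ ≤ i₁ in an image with colors in [1,σ]. The number of maximal rectangles with these bottom and top rows is at most n·σ. -/
/-!
Fix the rows and the left column `j₀`. Widening a rectangle to the right only enlarges its
fingerprint, and a maximal rectangle cannot be widened without changing it; so the right
columns `j₁` of the maximal rectangles are told apart by the size of their fingerprint, a
number in `[1, σ]`. Summing over the `n` left columns gives `n·σ`.
-/

section

variable {m n σ : ℕ} (M : Fin m → Fin n → Fin σ) (i0 i1 : Fin m) (j0 : Fin n)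

lemma fpF_mono_right {j1 j1' : Fin n} (h : j1 ≤ j1') :
    fpF M i0 i1 j0 j1 ⊆ fpF M i0 i1 j0 j1' := by
  refine Finset.image_subset_image fun p hp => ?_
  simp only [Finset.mem_filter, Finset.mem_univ, true_and] at hp ⊢
  exact ⟨hp.1, hp.2.1, hp.2.2.1, hp.2.2.2.trans h⟩

lemma fpF_nonempty {i0 i1 : Fin m} {j0 j1 : Fin n} (hi : i0 ≤ i1) (hj : j0 ≤ j1) :
    (fpF M i0 i1 j0 j1).Nonempty :=
  ⟨M i0 j0, Finset.mem_image.2 ⟨(i0, j0), by simp [hi, hj], rfl⟩⟩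

variable {M i0 i1 j0}

lemma MaximalRect.eq_of_le_of_fpF_eq {j1 j1' : Fin n} (h : MaximalRect M i0 i1 j0 j1)
    (hle : j1 ≤ j1') (heq : fpF M i0 i1 j0 j1' = fpF M i0 i1 j0 j1) : j1 = j1' := by
  by_contra hne
  exact h.2.2 i0 i1 j0 j1' le_rfl le_rfl le_rfl hle (by simp [Ne.symm hne]) heq

lemma MaximalRect.eq_of_card_fpF_eq {j1 j1' : Fin n} (h : MaximalRect M i0 i1 j0 j1)
    (h' : MaximalRect M i0 i1 j0 j1')
    (hcard : (fpF M i0 i1 j0 j1).card = (fpF M i0 i1 j0 j1').card) : j1 = j1' := by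
  rcases le_total j1 j1' with hle | hle
  · exact h.eq_of_le_of_fpF_eq hle
      (Finset.eq_of_subset_of_card_le (fpF_mono_right M i0 i1 j0 hle) hcard.ge).symm
  · exact (h'.eq_of_le_of_fpF_eq hle
      (Finset.eq_of_subset_of_card_le (fpF_mono_right M i0 i1 j0 hle) hcard.le).symm).symm

variable (M i0 i1 j0)

open Classical in
lemma card_maximalRect_right_le :
    (Finset.univ.filter fun j1 => MaximalRect M i0 i1 j0 j1).card ≤ σ := by
  calc (Finset.univ.filter fun j1 => MaximalRect M i0 i1 j0 j1).card
      ≤ (Finset.Icc 1 σ).card := by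
        refine Finset.card_le_card_of_injOn (fun j1 => (fpF M i0 i1 j0 j1).card) ?_ ?_
        · intro j1 hj1
          simp only [Finset.coe_filter, Finset.mem_univ, true_and, Set.mem_ofPred_eq] at hj1
          simp only [Finset.coe_Icc, Set.mem_Icc]
          exact ⟨(fpF_nonempty M hj1.1 hj1.2.1).card_pos,
            (Finset.card_le_univ _).trans_eq (Fintype.card_fin σ)⟩
        · intro j1 hj1 j1' hj1' hcard
          simp only [Finset.coe_filter, Finset.mem_univ, true_and, Set.mem_ofPred_eq]
            at hj1 hj1'
          exact hj1.eq_of_card_fpF_eq hj1' hcard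
    _ = σ := by simp

end

theorem statement6_general (m n σ : ℕ) (M : Fin m → Fin n → Fin σ) (i0 i1 : Fin m) :
    {p : Fin n × Fin n | MaximalRect M i0 i1 p.1 p.2}.ncard ≤ n * σ := by
  classical
  calc {p : Fin n × Fin n | MaximalRect M i0 i1 p.1 p.2}.ncard
      = (Finset.univ.filter fun p : Fin n × Fin n => MaximalRect M i0 i1 p.1 p.2).card := by
        rw [Set.ncard_eq_toFinset_card']
        simp
    _ = ∑ j0, (Finset.univ.filter fun j1 => MaximalRect M i0 i1 j0 j1).card := by
        simp only [Finset.card_filter, Fintype.sum_prod_type]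
    _ ≤ ∑ _j0 : Fin n, σ := Finset.sum_le_sum fun j0 _ => card_maximalRect_right_le M i0 i1 j0
    _ = n * σ := by simp

/-- For fixed bottom and top rows, the number of maximal rectangles with these
rows is at most n·σ. -/
theorem statement6 (m n σ : ℕ) (M : Fin m → Fin n → Fin σ) (i0 i1 : Fin m)
    (hi : i0 ≤ i1) :
    {p : Fin n × Fin n | MaximalRect M i0 i1 p.1 p.2}.ncard ≤ n * σ :=
  statement6_general m n σ M i0 i1
end

section
/- For an m×n image with colors in [1,σ], a rectangle ⟨i₀,i₁;j₀,j−1⟩ (with the same fixed rows and right column j−1) is maximal to the bottom if and only if there exists a color c occurring in row i₀−1 within columns [1, j−1] whose rightmost occurrence column p in row i₀−1 satisfies l(c) < j₀ ≤ p, where l(c) is the rightmost column of ⟨i₀,i₁;1,j−1⟩ containing an occurrence of c (l(c) = 0 if c does not occur there). -/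
/-!
Adding row `i₀ - 1` to the rectangle adds exactly the colors of that row segment, so the
fingerprint changes iff some color `c` of the segment is missing from ⟨i₀,i₁;j₀,j₁⟩. Since
`c` already occurs at a column `≥ j₀`, its rightmost occurrence `p` in the row up to `j₁`
also satisfies `j₀ ≤ p`.
-/

section Fingerprint

variable {m n σ : ℕ} (M : Fin m → Fin n → Fin σ)

lemma mem_fpF {i0 i1 : Fin m} {j0 j1 : Fin n} {c : Fin σ} :
    c ∈ fpF M i0 i1 j0 j1 ↔
      ∃ i j, i0 ≤ i ∧ i ≤ i1 ∧ j0 ≤ j ∧ j ≤ j1 ∧ M i j = c := by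
  simp [fpF, and_assoc]

lemma fpF_eq_row_union {ib i0 i1 : Fin m} (j0 j1 : Fin n)
    (hb : ib.val + 1 = i0.val) (hbi : ib ≤ i1) :
    fpF M ib i1 j0 j1 = fpF M ib ib j0 j1 ∪ fpF M i0 i1 j0 j1 := by
  ext c
  simp only [Finset.mem_union, mem_fpF]
  constructor
  · rintro ⟨i, j, hbi', hi1, hj0, hj1, rfl⟩
    rcases eq_or_lt_of_le hbi' with rfl | hlt
    · exact Or.inl ⟨ib, j, le_rfl, le_rfl, hj0, hj1, rfl⟩
    · exact Or.inr ⟨i, j, Fin.le_def.2 (by omega), hi1, hj0, hj1, rfl⟩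
  · rintro (⟨i, j, hbi', hib, hj0, hj1, rfl⟩ | ⟨i, j, hi0, hi1, hj0, hj1, rfl⟩)
    · exact ⟨i, j, hbi', hib.trans hbi, hj0, hj1, rfl⟩
    · exact ⟨i, j, Fin.le_def.2 (by omega), hi1, hj0, hj1, rfl⟩

lemma fpF_ne_iff_exists_row_color {ib i0 i1 : Fin m} (j0 j1 : Fin n)
    (hb : ib.val + 1 = i0.val) (hbi : ib ≤ i1) :
    fpF M ib i1 j0 j1 ≠ fpF M i0 i1 j0 j1 ↔
      ∃ c ∈ fpF M ib ib j0 j1, c ∉ fpF M i0 i1 j0 j1 := by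
  rw [fpF_eq_row_union M j0 j1 hb hbi, Ne, Finset.union_eq_right, Finset.not_subset]

end Fingerprint

lemma exists_ge_isGreatest {α : Type*} [Fintype α] [LinearOrder α] {P : α → Prop}
    {q : α} (hq : P q) : ∃ p, q ≤ p ∧ P p ∧ ∀ q', P q' → q' ≤ p := by
  classical
  let S := Finset.univ.filter P
  have hqS : q ∈ S := by simpa [S] using hq
  refine ⟨S.max' ⟨q, hqS⟩, S.le_max' q hqS, ?_, fun q' hq' => S.le_max' q' (by simpa [S])⟩
  simpa [S] using S.max'_mem ⟨q, hqS⟩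

theorem statement12_general (m n σ : ℕ) (M : Fin m → Fin n → Fin σ)
    (i0 i1 ib : Fin m) (j0 je : Fin n)
    (hb : ib.val + 1 = i0.val) (hi : i0 ≤ i1) :
    fpF M ib i1 j0 je ≠ fpF M i0 i1 j0 je ↔
      ∃ c : Fin σ, ∃ p : Fin n,
        j0 ≤ p ∧ p ≤ je ∧ M ib p = c ∧
        (∀ q : Fin n, q ≤ je → M ib q = c → q ≤ p) ∧
        (∀ q : Fin n, j0 ≤ q → q ≤ je →
          ∀ i : Fin m, i0 ≤ i → i ≤ i1 → M i q ≠ c) := by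
  have hbi : ib ≤ i1 := le_trans (Fin.le_def.2 (by omega)) hi
  have missing_iff {c : Fin σ} : c ∉ fpF M i0 i1 j0 je ↔
      ∀ q, j0 ≤ q → q ≤ je → ∀ i, i0 ≤ i → i ≤ i1 → M i q ≠ c := by
    simp only [mem_fpF]
    grind
  rw [fpF_ne_iff_exists_row_color M j0 je hb hbi]
  constructor
  · rintro ⟨c, hrow, hmiss⟩
    obtain ⟨i, q, hi', hi'', hq0, hqe, rfl⟩ := (mem_fpF M).1 hrow
    obtain rfl : i = ib := le_antisymm hi'' hi'
    obtain ⟨p, hqp, ⟨hpe, hpc⟩, hmax⟩ :=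
      exists_ge_isGreatest (P := fun q' => q' ≤ je ∧ M i q' = M i q) ⟨hqe, rfl⟩
    exact ⟨_, p, hq0.trans hqp, hpe, hpc, fun q' h1 h2 => hmax q' ⟨h1, h2⟩,
      missing_iff.1 hmiss⟩
  · rintro ⟨c, p, hp0, hpe, hpc, -, hmiss⟩
    exact ⟨c, (mem_fpF M).2 ⟨ib, p, le_rfl, le_rfl, hp0, hpe, hpc⟩, missing_iff.2 hmiss⟩

/-- A rectangle ⟨i₀,i₁;j₀,je⟩ is maximal to the bottom iff there is a color c
occurring in the row ib just below i₀ within columns [1,je] whose rightmost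
occurrence column p in row ib satisfies l(c) < j₀ ≤ p, where l(c) is the
rightmost column of ⟨i₀,i₁;1,je⟩ containing c (so l(c) < j₀ means c has no
occurrence in ⟨i₀,i₁;j₀,je⟩). -/
theorem statement12 (m n σ : ℕ) (M : Fin m → Fin n → Fin σ)
    (i0 i1 ib : Fin m) (j0 je : Fin n)
    (hb : ib.val + 1 = i0.val) (hi : i0 ≤ i1) (hj : j0 ≤ je) :
    fpF M ib i1 j0 je ≠ fpF M i0 i1 j0 je ↔
      ∃ c : Fin σ, ∃ p : Fin n,
        j0 ≤ p ∧ p ≤ je ∧ M ib p = c ∧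
        (∀ q : Fin n, q ≤ je → M ib q = c → q ≤ p) ∧
        (∀ q : Fin n, j0 ≤ q → q ≤ je →
          ∀ i : Fin m, i0 ≤ i → i ≤ i1 → M i q ≠ c) :=
  statement12_general m n σ M i0 i1 ib j0 je hb hi
end
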